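/- arXiv:2405.08812 — 4 statements merged into one kernel-verified Lean document; each statement's English description precedes it below -/
import Mathlib

section
/- For every integer d ≥ 3, the eigenvalues λ = λ⁺_d > 1 and μ = λ⁻_d < 1 are non-resonant: there are no nonnegative integers n, m with n + m ≥ 2 satisfying λ = λⁿμᵐ, and none satisfying μ = λⁿμᵐ. -/
/-!
Write `λ = a + b√D` with `a, b > 0` rational and `√D` irrational. Every positive power of `λ` is
then `p + q√D` with `q > 0`, hence irrational, so `λ^a q = λ^b r` with nonzero rationals `q, r`
forces `a = b` and `q = r`. Since `λμ = d²`, multiplying `λ = λⁿμᵐ` by `λᵐ` gives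
`λ^(m+1) = λⁿ d^(2m)`, so `(n, m) = (1, 0)`; multiplying `μ = λⁿμᵐ` by `λ^(m+1)` gives
`λᵐ d² = λ^(n+1) d^(2m)`, so `(n, m) = (0, 1)`.
-/

lemma not_isSquare_nine_mul_sq_sub_ten_mul_add_one {d : ℤ} (hd : 2 ≤ d) :
    ¬IsSquare (9 * d ^ 2 - 10 * d + 1) := by
  rintro ⟨t, ht⟩
  rw [← abs_mul_abs_self t] at ht
  rcases (by omega : |t| ≤ 3 * d - 2 ∨ 3 * d - 1 ≤ |t|) with h | h <;> nlinarith [abs_nonneg t]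

lemma exists_pos_rat_add_mul_pow_succ_eq {s : ℝ} {D a b : ℚ} (hs : s ^ 2 = D) (hD : 0 < D)
    (ha : 0 < a) (hb : 0 < b) (k : ℕ) :
    ∃ p q : ℚ, 0 < p ∧ 0 < q ∧ (a + b * s) ^ (k + 1) = p + q * s := by
  induction k with
  | zero => exact ⟨a, b, ha, hb, pow_one _⟩
  | succ k ih =>
    obtain ⟨p, q, hp, hq, hk⟩ := ih
    refine ⟨p * a + q * b * D, p * b + q * a, by positivity, by positivity, ?_⟩
    rw [pow_succ, hk]
    push_cast
    linear_combination (q : ℝ) * b * hs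

lemma Irrational.ratCast_add_mul_pow {s : ℝ} {D a b : ℚ} (hs : Irrational s) (hs2 : s ^ 2 = D)
    (ha : 0 < a) (hb : 0 < b) {k : ℕ} (hk : k ≠ 0) : Irrational ((a + b * s) ^ k) := by
  have hD : 0 < D := by
    have : (0 : ℝ) < D := hs2 ▸ pow_two_pos_of_ne_zero hs.ne_zero
    exact_mod_cast this
  obtain ⟨k, rfl⟩ := Nat.exists_eq_succ_of_ne_zero hk
  obtain ⟨p, q, -, hq, hpq⟩ := exists_pos_rat_add_mul_pow_succ_eq hs2 hD ha hb k
  rw [hpq]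
  exact (hs.ratCast_mul hq.ne').ratCast_add p

lemma pow_mul_ratCast_eq_pow_mul_ratCast_iff {x : ℝ} (hx : ∀ k ≠ 0, Irrational (x ^ k))
    {a b : ℕ} {q r : ℚ} (hq : q ≠ 0) (hr : r ≠ 0) :
    x ^ a * q = x ^ b * r ↔ a = b ∧ q = r := by
  refine ⟨fun h ↦ ?_, by rintro ⟨rfl, rfl⟩; rfl⟩
  have hxa (n : ℕ) : x ^ n ≠ 0 := pow_ne_zero n (by simpa using (hx 1 one_ne_zero).ne_zero)
  suffices a = b by
    subst this
    exact ⟨rfl, by exact_mod_cast mul_left_cancel₀ (hxa a) h⟩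
  wlog hab : a < b generalizing a b q r
  · rcases (not_lt.mp hab).eq_or_lt with heq | hlt
    · exact heq.symm
    · exact (this hr hq h.symm hlt).symm
  have hpow : x ^ (b - a) = (q / r : ℚ) := by
    rw [Rat.cast_div, eq_div_iff (by exact_mod_cast hr)]
    refine mul_left_cancel₀ (hxa a) ?_
    rw [h, ← mul_assoc, ← pow_add, Nat.add_sub_cancel' hab.le]
  exact ((hx (b - a) (Nat.sub_ne_zero_of_lt hab)).ne_rat _ hpow).elim

theorem nonresonant_of_mul_eq_ratCast {lam mu : ℝ} {c : ℚ}
    (hlam : ∀ k ≠ 0, Irrational (lam ^ k)) (hc : 1 < c) (hprod : lam * mu = c) :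
    (¬ ∃ n m : ℕ, 2 ≤ n + m ∧ lam = lam ^ n * mu ^ m) ∧
    (¬ ∃ n m : ℕ, 2 ≤ n + m ∧ mu = lam ^ n * mu ^ m) := by
  have hc0 : 0 < c := zero_lt_one.trans hc
  constructor
  · rintro ⟨n, m, hnm, h⟩
    have key : lam ^ (m + 1) * (1 : ℚ) = lam ^ n * (c ^ m : ℚ) := by
      push_cast
      rw [← hprod, mul_pow]
      linear_combination lam ^ m * h
    obtain ⟨rfl, hcm⟩ :=
      (pow_mul_ratCast_eq_pow_mul_ratCast_iff hlam one_ne_zero (pow_pos hc0 m).ne').mp key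
    have hm : m = 0 := by
      by_contra hm
      exact (one_lt_pow₀ hc hm).ne hcm
    omega
  · rintro ⟨n, m, hnm, h⟩
    have key : lam ^ m * c = lam ^ (n + 1) * (c ^ m : ℚ) := by
      push_cast
      rw [← hprod, mul_pow]
      linear_combination lam ^ (m + 1) * h
    obtain ⟨rfl, hcm⟩ :=
      (pow_mul_ratCast_eq_pow_mul_ratCast_iff hlam hc0.ne' (pow_pos hc0 m).ne').mp key
    have hm : n + 1 = 1 := (pow_right_inj₀ hc0 hc.ne').mp (hcm.symm.trans (pow_one c).symm)
    omega

theorem stmt12 (d : ℕ) (hd : 3 ≤ d)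
    (lam mu : ℝ)
    (hlam : lam = (9 * (d : ℝ) ^ 2 - 8 * d + 1 + (3 * d - 1) * Real.sqrt (9 * d ^ 2 - 10 * d + 1)) / 2)
    (hmu : mu = (9 * (d : ℝ) ^ 2 - 8 * d + 1 - (3 * d - 1) * Real.sqrt (9 * d ^ 2 - 10 * d + 1)) / 2) :
    (¬ ∃ n m : ℕ, 2 ≤ n + m ∧ lam = lam ^ n * mu ^ m) ∧
    (¬ ∃ n m : ℕ, 2 ≤ n + m ∧ mu = lam ^ n * mu ^ m) := by
  have hdZ : (3 : ℤ) ≤ d := by exact_mod_cast hd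
  have hdQ : (3 : ℚ) ≤ d := by exact_mod_cast hd
  have hdR : (3 : ℝ) ≤ d := by exact_mod_cast hd
  set s := √(9 * (d : ℝ) ^ 2 - 10 * d + 1)
  have hs : Irrational s := by
    have := (irrational_sqrt_intCast_iff_of_nonneg (by nlinarith)).mpr
      (not_isSquare_nine_mul_sq_sub_ten_mul_add_one (d := d) (by omega))
    push_cast at this
    exact this
  have hs2 : s ^ 2 = ((9 * d ^ 2 - 10 * d + 1 : ℚ) : ℝ) := by
    push_cast
    exact Real.sq_sqrt (by nlinarith)
  have hlam' : lam = ((9 * d ^ 2 - 8 * d + 1) / 2 : ℚ) + ((3 * d - 1) / 2 : ℚ) * s := by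
    rw [hlam]; push_cast; ring
  have hpow : ∀ k ≠ 0, Irrational (lam ^ k) := fun k hk ↦
    hlam' ▸ hs.ratCast_add_mul_pow hs2 (by nlinarith) (by linarith) hk
  have hprod : lam * mu = ((d ^ 2 : ℚ) : ℝ) := by
    rw [hlam, hmu]
    push_cast at hs2 ⊢
    linear_combination (-(3 * (d : ℝ) - 1) ^ 2 / 4) * hs2
  exact nonresonant_of_mul_eq_ratCast hpow (by nlinarith) hprod
end

section
/- For every odd integer d ≥ 3, the inequality 1 - (2(d-1)/(2d-1))^d + (1/(2+1/(d-1)) - (2(d-1)/(2d-1))^d)(1 + (3 + 1/(d-1))^{1/d}) > 0 holds. -/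
private lemma rpow_inv_le_of_pow (n : ℕ) (hn : n ≠ 0) (x b : ℝ) (hx : 0 ≤ x) (hb : 0 ≤ b)
    (h : x ≤ b ^ n) : x ^ ((n : ℝ)⁻¹) ≤ b := by
  calc x ^ ((n : ℝ)⁻¹) ≤ (b ^ n) ^ ((n : ℝ)⁻¹) :=
        Real.rpow_le_rpow hx h (by positivity)
    _ = b := Real.pow_rpow_inv_natCast hb hn

private lemma one_le_rpow' (x y : ℝ) (hx : 1 ≤ x) (hy : 0 ≤ y) : 1 ≤ x ^ y := by
  calc (1 : ℝ) = 1 ^ y := (Real.one_rpow y).symm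
    _ ≤ x ^ y := Real.rpow_le_rpow zero_le_one hx hy

theorem stmt16 (d : ℕ) (hd : 3 ≤ d) (hodd : Odd d) :
    1 - (2 * ((d : ℝ) - 1) / (2 * d - 1)) ^ d +
      (1 / (2 + 1 / ((d : ℝ) - 1)) - (2 * ((d : ℝ) - 1) / (2 * d - 1)) ^ d) *
        (1 + (3 + 1 / ((d : ℝ) - 1)) ^ ((d : ℝ)⁻¹)) > 0 := by
  rcases lt_or_ge d 9 with h9 | h9
  · interval_cases d
    · -- d = 3
      have hs : ((3 : ℝ) + 1 / ((3:ℕ) - 1 : ℝ)) ^ (((3:ℕ) : ℝ)⁻¹) ≤ 1.52 := by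
        apply rpow_inv_le_of_pow 3 (by norm_num) _ _ (by norm_num) (by norm_num)
        norm_num
      push_cast at hs ⊢
      nlinarith [hs]
    · exact absurd hodd (by decide)
    · -- d = 5
      have hs : ((3 : ℝ) + 1 / ((5:ℕ) - 1 : ℝ)) ^ (((5:ℕ) : ℝ)⁻¹) ≤ 1.3 := by
        apply rpow_inv_le_of_pow 5 (by norm_num) _ _ (by norm_num) (by norm_num)
        norm_num
      push_cast at hs ⊢
      nlinarith [hs]
    · exact absurd hodd (by decide)
    · -- d = 7
      have hs : ((3 : ℝ) + 1 / ((7:ℕ) - 1 : ℝ)) ^ (((7:ℕ) : ℝ)⁻¹) ≤ 1.2 := by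
        apply rpow_inv_le_of_pow 7 (by norm_num) _ _ (by norm_num) (by norm_num)
        norm_num
      push_cast at hs ⊢
      nlinarith [hs]
    · exact absurd hodd (by decide)
  · -- d ≥ 9
    have hdR : (9 : ℝ) ≤ (d : ℝ) := by exact_mod_cast h9
    have hd1 : (8 : ℝ) ≤ (d : ℝ) - 1 := by linarith
    have hd1pos : (0 : ℝ) < (d : ℝ) - 1 := by linarith
    have h2d : (0 : ℝ) < 2 * (d : ℝ) - 1 := by linarith
    set r : ℝ := 2 * ((d : ℝ) - 1) / (2 * d - 1) with hr_def
    set s : ℝ := (3 + 1 / ((d : ℝ) - 1)) ^ ((d : ℝ)⁻¹) with hs_def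
    have ha : 1 / (2 + 1 / ((d : ℝ) - 1)) = r / 2 := by
      rw [hr_def]; field_simp; ring
    have hr_eq : r = 1 - 1 / (2 * (d : ℝ) - 1) := by
      rw [hr_def]; field_simp; ring
    have hr0 : 0 ≤ r := by positivity
    have hr1 : r ≤ 1 := by rw [hr_eq]; have : 0 < 1 / (2 * (d:ℝ) - 1) := by positivity
                           linarith
    have hr_ge : (16 : ℝ) / 17 ≤ r := by
      rw [hr_def, div_le_div_iff₀ (by norm_num) h2d]
      linarith
    -- bound on s
    have hxle : (3 : ℝ) + 1 / ((d : ℝ) - 1) ≤ 3.125 := by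
      have : 1 / ((d : ℝ) - 1) ≤ 1 / 8 := by
        apply div_le_div_of_nonneg_left (by norm_num) (by norm_num) hd1
      linarith
    have hs_le : s ≤ 1.14 := by
      rw [hs_def]
      have hcast : ((d : ℝ))⁻¹ = (((d : ℕ) : ℝ))⁻¹ := by norm_num
      rw [hcast]
      apply rpow_inv_le_of_pow d (by omega) _ _ (by positivity) (by norm_num)
      calc (3 : ℝ) + 1 / ((d : ℝ) - 1) ≤ 3.125 := hxle
        _ ≤ (1.14 : ℝ) ^ 9 := by norm_num
        _ ≤ (1.14 : ℝ) ^ d := pow_le_pow_right₀ (by norm_num) h9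
    have hs_ge : 1 ≤ s := by
      apply one_le_rpow' _ _ _ (by positivity)
      have : 0 < 1 / ((d : ℝ) - 1) := by positivity
      linarith
    -- bound on r^d
    have hp0 : 0 ≤ r ^ d := by positivity
    have hexp : r ≤ Real.exp (-(1 / (2 * (d : ℝ) - 1))) := by
      rw [hr_eq]
      have := Real.add_one_le_exp (-(1 / (2 * (d : ℝ) - 1)))
      linarith
    have hpow21 : r ^ (2 * d - 1) ≤ Real.exp (-1) := by
      calc r ^ (2 * d - 1) ≤ (Real.exp (-(1 / (2 * (d : ℝ) - 1)))) ^ (2 * d - 1) :=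
            pow_le_pow_left₀ hr0 hexp _
        _ = Real.exp (((2 * d - 1 : ℕ) : ℝ) * (-(1 / (2 * (d : ℝ) - 1)))) :=
            (Real.exp_nat_mul _ _).symm
        _ = Real.exp (-1) := by
            congr 1
            have : ((2 * d - 1 : ℕ) : ℝ) = 2 * (d : ℝ) - 1 := by
              push_cast [Nat.cast_sub (by omega : 1 ≤ 2 * d)]; ring
            rw [this]
            field_simp
    have hexp1 : Real.exp (-1) ≤ 0.368 := by
      rw [Real.exp_neg]
      rw [inv_le_comm₀ (Real.exp_pos 1) (by norm_num)]
      calc (0.368 : ℝ)⁻¹ ≤ 2.7182818283 := by norm_num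
        _ ≤ Real.exp 1 := le_of_lt Real.exp_one_gt_d9
    have hsq : (r ^ d) ^ 2 ≤ 0.368 := by
      have h2d' : 2 * d - 1 + 1 = 2 * d := by omega
      have : (r ^ d) ^ 2 = r ^ (2 * d - 1) * r := by
        rw [← pow_mul, ← pow_succ, h2d']; ring_nf
      rw [this]
      calc r ^ (2 * d - 1) * r ≤ 0.368 * 1 := by
            apply mul_le_mul (le_trans hpow21 hexp1) hr1 hr0 (by norm_num)
        _ = 0.368 := by norm_num
    have hp_le : r ^ d ≤ 0.607 := by nlinarith [hp0, hsq]
    rw [ha]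
    nlinarith [hp_le, hp0, hs_le, hs_ge, hr_ge, hr1,
      mul_nonneg (sub_nonneg.2 hr_ge) (sub_nonneg.2 hs_ge),
      mul_nonneg (sub_nonneg.2 hp_le) (sub_nonneg.2 hs_ge)]
end

section
/- For every odd d ≥ 3 and every m ∈ [m̂*, m⁻_d] with m̂* = -d/(d-1), the function x_m(t) = mt + 1 - ((m+1)t + 1)^d satisfies x_m(0) = 0, x_m'(t) ≤ 0 for all t ∈ [0, 1/(1-m)] with equality only at t = 0 and m = m̂*, and x_m(1/(1-m)) < (1/(1-m))(1 - 2/√e) < 0. -/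
/-!
On `[0, 1/(1-m)]` the inner quantity `s = (m+1)t + 1` lies in `(0, 1]`, so the derivative
`m - d s^(d-1) (m+1)` splits as `-(m(d-1) + d) + d(m+1)(1 - s^(d-1))`, a sum of two
nonpositive terms; it vanishes only if both do, i.e. `s = 1` (so `t = 0`) and `m = -d/(d-1)`.

At the right endpoint `T = 1/(1-m)` one has `s = 2T`, hence `x(T) = T(1 - 2(2T)^(d-1))`.
The lower bound `m ≥ -d/(d-1)` gives `2T ≥ 2n/(2n+1)` with `n = d - 1`, and
`(2n/(2n+1))^n > e^(-1/2)` because `1 + 1/(2n) < e^(1/(2n))`.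
-/

open Set Real

noncomputable def profile (d : ℕ) (m t : ℝ) : ℝ := m * t + 1 - ((m + 1) * t + 1) ^ d

theorem hasDerivAt_profile (d : ℕ) (m t : ℝ) :
    HasDerivAt (profile d m) (m - d * ((m + 1) * t + 1) ^ (d - 1) * (m + 1)) t := by
  have hlin : ∀ c : ℝ, HasDerivAt (fun t : ℝ => c * t + 1) c t := fun c => by
    simpa using ((hasDerivAt_id t).const_mul c).add_const 1
  exact (hlin m).sub ((hlin (m + 1)).pow d)

theorem four_mul_div_lt_neg_one {d : ℝ} (hd : 1 < d) :
    4 * d / (1 - d - √(9 * d ^ 2 - 10 * d + 1)) < -1 := by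
  have hsqrt : √(9 * d ^ 2 - 10 * d + 1) < 3 * d + 1 := by
    rw [sqrt_lt' (by linarith)]
    nlinarith
  have hden : 1 - d - √(9 * d ^ 2 - 10 * d + 1) < 0 := by
    linarith [sqrt_nonneg (9 * d ^ 2 - 10 * d + 1)]
  rw [div_lt_iff_of_neg hden]
  linarith

theorem mul_add_one_mem_Ioc {m t : ℝ} (hm : m ≤ -1) (ht : t ∈ Icc 0 (1 / (1 - m))) :
    (m + 1) * t + 1 ∈ Ioc 0 1 := by
  obtain ⟨ht0, ht1⟩ := ht
  have h1m : 0 < 1 - m := by linarith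
  have hend : (m + 1) * (1 / (1 - m)) + 1 = 2 / (1 - m) := by
    field_simp
    ring
  constructor
  · have : (m + 1) * (1 / (1 - m)) ≤ (m + 1) * t := mul_le_mul_of_nonpos_left ht1 (by linarith)
    linarith [div_pos two_pos h1m]
  · nlinarith

theorem sub_mul_pow_mul_nonpos {d : ℕ} (hd : 2 ≤ d) {m s : ℝ} (hm : -(d : ℝ) ≤ m * (d - 1))
    (hm1 : m + 1 < 0) (hs0 : 0 ≤ s) (hs1 : s ≤ 1) :
    m - d * s ^ (d - 1) * (m + 1) ≤ 0 ∧
      (m - d * s ^ (d - 1) * (m + 1) = 0 → s = 1 ∧ m * (d - 1) = -d) := by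
  have hsplit : m - d * s ^ (d - 1) * (m + 1) =
      -(m * (d - 1) + d) + d * (m + 1) * (1 - s ^ (d - 1)) := by ring
  have hA : 0 ≤ m * (d - 1) + d := by linarith
  have hB : d * (m + 1) * (1 - s ^ (d - 1)) ≤ 0 :=
    mul_nonpos_of_nonpos_of_nonneg
      (mul_nonpos_of_nonneg_of_nonpos (Nat.cast_nonneg d) hm1.le)
      (sub_nonneg.2 (pow_le_one₀ hs0 hs1))
  refine ⟨by linarith, fun h => ⟨?_, by linarith⟩⟩
  have hdm : (d : ℝ) * (m + 1) ≠ 0 :=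
    mul_ne_zero (by positivity) hm1.ne
  have hpow : s ^ (d - 1) = 1 := by
    have : d * (m + 1) * (1 - s ^ (d - 1)) = 0 := by linarith
    linarith [(mul_eq_zero.1 this).resolve_left hdm]
  exact (pow_eq_one_iff_of_nonneg hs0 (by omega)).1 hpow

theorem exp_neg_half_lt_pow {n : ℕ} (hn : 0 < n) :
    exp (-(1 / 2)) < (2 * n / (2 * n + 1)) ^ n := by
  have hn' : (0 : ℝ) < n := by exact_mod_cast hn
  have hstep : exp (-(1 / (2 * n))) < 2 * n / (2 * n + 1) := by
    have hinv : (2 * n / (2 * n + 1) : ℝ) = (1 / (2 * n) + 1 : ℝ)⁻¹ := by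
      field_simp
      ring
    rw [exp_neg, hinv]
    exact inv_strictAnti₀ (by positivity) (add_one_lt_exp (by positivity))
  calc exp (-(1 / 2)) = exp (-(1 / (2 * n))) ^ n := by
        rw [← exp_nat_mul]
        congr 1
        field_simp
    _ < (2 * n / (2 * n + 1)) ^ n := pow_lt_pow_left₀ hstep (exp_pos _).le hn.ne'

theorem profile_inv_one_sub_lt {d : ℕ} (hd : 2 ≤ d) {m : ℝ} (hm : -(d : ℝ) ≤ m * (d - 1))
    (hm1 : m < 1) : profile d m (1 / (1 - m)) < 1 / (1 - m) * (1 - 2 / √(exp 1)) := by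
  obtain ⟨n, rfl⟩ : ∃ n, d = n + 1 := ⟨d - 1, by omega⟩
  push_cast at hm
  have h1m : 0 < 1 - m := by linarith
  have hn : (0 : ℝ) < n := by exact_mod_cast (by omega : 0 < n)
  have hbase : 2 * n / (2 * n + 1) ≤ 2 / (1 - m) := by
    rw [div_le_div_iff₀ (by positivity) h1m]
    nlinarith
  have hpow : exp (-(1 / 2)) < (2 / (1 - m)) ^ n :=
    (exp_neg_half_lt_pow (by omega)).trans_le (pow_le_pow_left₀ (by positivity) hbase n)
  have hvalue : profile (n + 1) m (1 / (1 - m)) =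
      1 / (1 - m) * (1 - 2 * (2 / (1 - m)) ^ n) := by
    simp only [profile, pow_succ]
    field_simp
    ring
  have hsqrt : 2 / √(exp 1) = 2 * exp (-(1 / 2)) := by
    rw [← exp_half, exp_neg]
    ring_nf
  rw [hvalue, hsqrt]
  exact mul_lt_mul_of_pos_left (by linarith) (by positivity)

theorem one_sub_two_div_sqrt_exp_one_neg : 1 - 2 / √(exp 1) < 0 := by
  have hlt : √(exp 1) < 2 := by
    rw [sqrt_lt' two_pos]
    linarith [exp_one_lt_d9]
  linarith [(one_lt_div (sqrt_pos.2 (exp_pos 1))).2 hlt]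

theorem stmt17_general (d : ℕ) (hd : 3 ≤ d)
    (mstar : ℝ) (hmstar : mstar = -(d : ℝ) / (d - 1))
    (mminus : ℝ) (hmminus : mminus = 4 * d / (1 - d - Real.sqrt (9 * d ^ 2 - 10 * d + 1)))
    (m : ℝ) (hm : m ∈ Icc mstar mminus)
    (x : ℝ → ℝ) (hx : ∀ t : ℝ, x t = m * t + 1 - ((m + 1) * t + 1) ^ d) :
    x 0 = 0 ∧
    (∀ t ∈ Icc (0 : ℝ) (1 / (1 - m)),
      deriv x t ≤ 0 ∧ (deriv x t = 0 → t = 0 ∧ m = mstar)) ∧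
    x (1 / (1 - m)) < (1 / (1 - m)) * (1 - 2 / Real.sqrt (Real.exp 1)) ∧
    (1 / (1 - m)) * (1 - 2 / Real.sqrt (Real.exp 1)) < 0 := by
  have hd1 : (0 : ℝ) < d - 1 := by
    have : (3 : ℝ) ≤ d := by exact_mod_cast hd
    linarith
  have hm_star : -(d : ℝ) ≤ m * (d - 1) := by
    have := hm.1
    rwa [hmstar, div_le_iff₀ hd1] at this
  have hm_neg : m < -1 := hm.2.trans_lt (hmminus ▸ four_mul_div_lt_neg_one (by linarith))
  obtain rfl : x = profile d m := funext hx
  refine ⟨by simp [profile], fun t ht => ?_, profile_inv_one_sub_lt (by omega) hm_star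
    (by linarith), mul_neg_of_pos_of_neg (by simp only [one_div, inv_pos]; linarith)
    one_sub_two_div_sqrt_exp_one_neg⟩
  obtain ⟨hs0, hs1⟩ := mul_add_one_mem_Ioc hm_neg.le ht
  obtain ⟨hle, hzero⟩ := sub_mul_pow_mul_nonpos (by omega) hm_star (by linarith) hs0.le hs1
  rw [(hasDerivAt_profile d m t).deriv]
  refine ⟨hle, fun h => ?_⟩
  obtain ⟨hs, hmd⟩ := hzero h
  refine ⟨?_, by rw [hmstar, eq_div_iff hd1.ne']; linarith⟩
  simpa [(by linarith : m + 1 ≠ 0)] using hs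

theorem stmt17 (d : ℕ) (hd : 3 ≤ d) (hodd : Odd d)
    (mstar : ℝ) (hmstar : mstar = -(d : ℝ) / (d - 1))
    (mminus : ℝ) (hmminus : mminus = 4 * d / (1 - d - Real.sqrt (9 * d ^ 2 - 10 * d + 1)))
    (m : ℝ) (hm : m ∈ Icc mstar mminus)
    (x : ℝ → ℝ) (hx : ∀ t : ℝ, x t = m * t + 1 - ((m + 1) * t + 1) ^ d) :
    x 0 = 0 ∧
    (∀ t ∈ Icc (0 : ℝ) (1 / (1 - m)),
      deriv x t ≤ 0 ∧ (deriv x t = 0 → t = 0 ∧ m = mstar)) ∧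
    x (1 / (1 - m)) < (1 / (1 - m)) * (1 - 2 / Real.sqrt (Real.exp 1)) ∧
    (1 / (1 - m)) * (1 - 2 / Real.sqrt (Real.exp 1)) < 0 :=
  stmt17_general d hd mstar hmstar mminus hmminus m hm x hx
end

section
/- For every odd d ≥ 3, the function y(t) = m̂*t + 1 - 2((m̂*+1)t + 1)^d with m̂* = -d/(d-1) satisfies y'(t) > 0 for all t ∈ [0, 1/(1 - m̂*)]. -/
/-!
With `k = d - 1` one has `m̂* = -(k+1)/k` and `m̂* + 1 = -1/k`, so
`y'(t) = -(k+1)/k + 2(k+1)/k · (1 - t/k)^k`. Bernoulli's inequality gives `(1 - t/k)^k ≥ 1 - t`,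
hence `y'(t) ≥ (k+1)(1 - 2t)/k`, which is positive because the right endpoint
`1/(1 - m̂*) = k/(2k+1)` lies below `1/2`.
-/

open Set

theorem hasDerivAt_mul_add_one_sub_two_mul_pow (m c : ℝ) (n : ℕ) (t : ℝ) :
    HasDerivAt (fun t => m * t + 1 - 2 * (c * t + 1) ^ n)
      (m - 2 * n * c * (c * t + 1) ^ (n - 1)) t := by
  have hlin (a : ℝ) : HasDerivAt (fun t => a * t + 1) a t := by
    simpa using ((hasDerivAt_id t).const_mul a).add_const 1
  exact ((hlin m).sub (((hlin c).pow n).const_mul 2)).congr_deriv (by ring)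

theorem one_sub_le_one_sub_div_pow {k : ℕ} (hk : 0 < k) {t : ℝ} (ht : t ≤ 2 * k) :
    1 - t ≤ (1 - t / k) ^ k := by
  have hk' : (0 : ℝ) < k := by exact_mod_cast hk
  have hbern := one_add_mul_le_pow (a := -(t / k))
    (by rw [neg_le_neg_iff, div_le_iff₀ hk']; linarith) k
  rwa [mul_neg, mul_div_cancel₀ t hk'.ne', ← sub_eq_add_neg, ← sub_eq_add_neg] at hbern

theorem neg_div_add_two_mul_div_mul_pow_pos {k : ℕ} (hk : 0 < k) {t : ℝ}
    (ht : t ∈ Icc (0 : ℝ) (k / (2 * k + 1))) :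
    0 < -((k + 1) / k) + 2 * ((k + 1) / k) * (1 - t / k) ^ k := by
  obtain ⟨ht0, ht1⟩ := ht
  have hk1 : (1 : ℝ) ≤ k := by exact_mod_cast hk
  have ht_half : t < 1 / 2 := by
    refine ht1.trans_lt ?_
    rw [div_lt_iff₀ (by positivity)]; linarith
  have hbern := one_sub_le_one_sub_div_pow hk (t := t) (by linarith)
  calc 0 < (k + 1) / k * (1 - 2 * t) := by
        have : (0 : ℝ) < 1 - 2 * t := by linarith
        positivity
    _ = -((k + 1) / k) + 2 * ((k + 1) / k) * (1 - t) := by ring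
    _ ≤ _ := by gcongr

theorem stmt18_general (d : ℕ) (hd : 3 ≤ d)
    (mstar : ℝ) (hmstar : mstar = -(d : ℝ) / (d - 1))
    (y : ℝ → ℝ) (hy : ∀ t : ℝ, y t = mstar * t + 1 - 2 * ((mstar + 1) * t + 1) ^ d) :
    ∀ t ∈ Icc (0 : ℝ) (1 / (1 - mstar)), 0 < deriv y t := by
  obtain ⟨k, rfl⟩ : ∃ k, d = k + 1 := ⟨d - 1, by omega⟩
  have hk : 0 < k := by omega
  have hk' : (k : ℝ) ≠ 0 := by positivity
  have hm : mstar = -((k + 1) / k) := by rw [hmstar]; push_cast; ring_nf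
  have hc : mstar + 1 = -(1 / k) := by rw [hm]; field_simp; ring
  have hbound : 1 / (1 - mstar) = k / (2 * k + 1) := by
    rw [hm, show 1 - -(((k : ℝ) + 1) / k) = (2 * k + 1) / k by field_simp; ring, one_div_div]
  intro t ht
  rw [funext hy, (hasDerivAt_mul_add_one_sub_two_mul_pow _ _ _ t).deriv, hc, Nat.add_sub_cancel]
  convert neg_div_add_two_mul_div_mul_pow_pos hk (hbound ▸ ht) using 1
  rw [hm]; push_cast; ring

theorem stmt18 (d : ℕ) (hd : 3 ≤ d) (hodd : Odd d)
    (mstar : ℝ) (hmstar : mstar = -(d : ℝ) / (d - 1))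
    (y : ℝ → ℝ) (hy : ∀ t : ℝ, y t = mstar * t + 1 - 2 * ((mstar + 1) * t + 1) ^ d) :
    ∀ t ∈ Icc (0 : ℝ) (1 / (1 - mstar)), 0 < deriv y t :=
  stmt18_general d hd mstar hmstar y hy
end
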